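/- arXiv:1307.4023 — 4 statements merged into one kernel-verified Lean document; each statement's English description precedes it below -/
import Mathlib

section
/- The bulk equation Q1 with δ=0, Q(u00,u10,u01,u11;a,b) = a(u00−u01)(u10−u11) − b(u00−u10)(u01−u11), together with the boundary equation q(x,y,z;a) = y(x+z) and the parameter map σ(a) = −a + 2μ (where μ is a fixed complex parameter), satisfies the 3D boundary consistency condition. -/
/-!
The boundary equation `y (x + z) = 0` with `y ≠ 0` forces `z = -x`; hence `y₂ = y₃ = -x` and
`w₁ = w₂ = x`. It remains to see that `w₃ = x`, i.e. that the top face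
`Q(y₁, z₁, z₂, x; σb, σa)` vanishes. Solving the two side faces for `z₁`, `z₂` and clearing
denominators turns this top face into `σa · σb · (y₁ + x)²` times the bottom face
`Q(y₁, x₂, x₁, x; a, b)`; the computation only uses `a + σa = b + σb`.
-/

/-- The bulk quad-graph equation. -/
noncomputable def Qbulk (u00 u10 u01 u11 a b : ℂ) : ℂ :=
  a * (u00 - u01) * (u10 - u11) - b * (u00 - u10) * (u01 - u11)

/-- The boundary equation. -/
noncomputable def qBdry (mu : ℂ) (x y z a : ℂ) : ℂ :=
  y * (x + z)

/-- The parameter map acting on edge labels. -/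
noncomputable def sigmaMap (mu : ℂ) (a : ℂ) : ℂ :=
  -a + 2 * mu

theorem add_sigmaMap (mu a : ℂ) : a + sigmaMap mu a = 2 * mu := by
  unfold sigmaMap; ring

theorem qBdry_one_sub_qBdry_zero (mu x y a : ℂ) : qBdry mu x y 1 a - qBdry mu x y 0 a = y := by
  unfold qBdry; ring

theorem eq_neg_of_qBdry_eq_zero {mu x y z a : ℂ} (h : qBdry mu x y z a = 0)
    (hc : qBdry mu x y 1 a - qBdry mu x y 0 a ≠ 0) : z = -x := by
  rw [qBdry_one_sub_qBdry_zero] at hc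
  exact eq_neg_of_add_eq_zero_right ((mul_eq_zero.mp h).resolve_left hc)

theorem Qbulk_one_sub_Qbulk_zero_left (u00 u01 u11 a b : ℂ) :
    Qbulk u00 1 u01 u11 a b - Qbulk u00 0 u01 u11 a b = a * (u00 - u01) + b * (u01 - u11) := by
  unfold Qbulk; ring

theorem Qbulk_one_sub_Qbulk_zero_right (u00 u10 u01 a b : ℂ) :
    Qbulk u00 u10 u01 1 a b - Qbulk u00 u10 u01 0 a b = b * (u00 - u10) - a * (u00 - u01) := by
  unfold Qbulk; ring

theorem eq_of_Qbulk_eq_zero_right {u00 u10 u01 v w a b : ℂ}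
    (hc : Qbulk u00 u10 u01 1 a b - Qbulk u00 u10 u01 0 a b ≠ 0)
    (hv : Qbulk u00 u10 u01 v a b = 0) (hw : Qbulk u00 u10 u01 w a b = 0) : v = w := by
  have h : (v - w) * (Qbulk u00 u10 u01 1 a b - Qbulk u00 u10 u01 0 a b) = 0 := by
    unfold Qbulk at *; linear_combination hv - hw
  exact sub_eq_zero.mp ((mul_eq_zero.mp h).resolve_right hc)

theorem Qbulk_top_eq_zero {a b s t x x1 x2 y1 z1 z2 : ℂ} (hst : a + s = b + t)
    (hbot : Qbulk y1 x2 x1 x a b = 0)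
    (hside1 : Qbulk y1 z1 x2 (-x) t a = 0) (hside2 : Qbulk y1 z2 x1 (-x) s b = 0)
    (hc1 : Qbulk y1 1 x2 (-x) t a - Qbulk y1 0 x2 (-x) t a ≠ 0)
    (hc2 : Qbulk y1 1 x1 (-x) s b - Qbulk y1 0 x1 (-x) s b ≠ 0) :
    Qbulk y1 z1 z2 x t s = 0 := by
  rw [Qbulk_one_sub_Qbulk_zero_left, sub_neg_eq_add] at hc1 hc2
  set D1 := t * (y1 - x2) + a * (x2 + x)
  set D2 := s * (y1 - x1) + b * (x1 + x)
  unfold Qbulk at *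
  have hz1 : D1 * (y1 - z1) = t * (y1 - x2) * (y1 + x) := by linear_combination -hside1
  have hz1' : D1 * (z1 - x) = a * (y1 - x) * (x2 + x) - 2 * t * x * (y1 - x2) := by
    linear_combination hside1
  have hz2 : D2 * (y1 - z2) = s * (y1 - x1) * (y1 + x) := by linear_combination -hside2
  have hz2' : D2 * (z2 - x) = b * (y1 - x) * (x1 + x) - 2 * s * x * (y1 - x1) := by
    linear_combination hside2
  have hcleared : D1 * D2 * (t * (y1 - z2) * (z1 - x) - s * (y1 - z1) * (z2 - x)) = 0 := by
    calc D1 * D2 * (t * (y1 - z2) * (z1 - x) - s * (y1 - z1) * (z2 - x))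
        = t * (D2 * (y1 - z2)) * (D1 * (z1 - x)) - s * (D1 * (y1 - z1)) * (D2 * (z2 - x)) := by
          ring
      _ = 0 := by
          rw [hz1, hz1', hz2, hz2']
          linear_combination s * t * (y1 + x) ^ 2 * hbot
            + 2 * s * t * x * (y1 + x) * (y1 - x1) * (y1 - x2) * hst
  exact (mul_eq_zero.mp hcleared).resolve_left (mul_ne_zero hc1 hc2)

theorem boundary_consistency_stmt_2_general
    (mu : ℂ) (a b : ℂ) 
    (x x1 x2 y1 y2 y3 z1 z2 w1 w2 w3 : ℂ)
    -- the eight equations of the scheme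
    (e1 : Qbulk y1 x2 x1 x a b = 0)
    (e2 : qBdry mu x x1 y2 a = 0)
    (e3 : qBdry mu x x2 y3 b = 0)
    (e4 : Qbulk y1 z1 x2 y3 (sigmaMap mu b) a = 0)
    (e5 : Qbulk y1 z2 x1 y2 (sigmaMap mu a) b = 0)
    (e6 : qBdry mu y2 z2 w1 b = 0)
    (e7 : qBdry mu y3 z1 w2 a = 0)
    (e8 : Qbulk y1 z1 z2 w3 (sigmaMap mu b) (sigmaMap mu a) = 0)
    -- nonvanishing of the coefficient of the determined variable in each
    -- affine-linear equation (coefficient = value at 1 minus value at 0)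
    (c2 : qBdry mu x x1 1 a - qBdry mu x x1 0 a ≠ 0)
    (c3 : qBdry mu x x2 1 b - qBdry mu x x2 0 b ≠ 0)
    (c4 : Qbulk y1 1 x2 y3 (sigmaMap mu b) a - Qbulk y1 0 x2 y3 (sigmaMap mu b) a ≠ 0)
    (c5 : Qbulk y1 1 x1 y2 (sigmaMap mu a) b - Qbulk y1 0 x1 y2 (sigmaMap mu a) b ≠ 0)
    (c6 : qBdry mu y2 z2 1 b - qBdry mu y2 z2 0 b ≠ 0)
    (c7 : qBdry mu y3 z1 1 a - qBdry mu y3 z1 0 a ≠ 0)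
    (c8 : Qbulk y1 z1 z2 1 (sigmaMap mu b) (sigmaMap mu a) - Qbulk y1 z1 z2 0 (sigmaMap mu b) (sigmaMap mu a) ≠ 0) :
    w1 = w2 ∧ w2 = w3 := by
  obtain rfl : y2 = -x := eq_neg_of_qBdry_eq_zero e2 c2
  obtain rfl : y3 = -x := eq_neg_of_qBdry_eq_zero e3 c3
  have hw1 : w1 = x := by simpa using eq_neg_of_qBdry_eq_zero e6 c6
  have hw2 : w2 = x := by simpa using eq_neg_of_qBdry_eq_zero e7 c7
  have htop : Qbulk y1 z1 z2 x (sigmaMap mu b) (sigmaMap mu a) = 0 :=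
    Qbulk_top_eq_zero (by rw [add_sigmaMap, add_sigmaMap]) e1 e4 e5 c4 c5
  have hw3 : w3 = x := eq_of_Qbulk_eq_zero_right c8 e8 htop
  exact ⟨hw1.trans hw2.symm, hw2.trans hw3.symm⟩

/-- 3D boundary consistency of the triple (Q, q, σ). -/
theorem boundary_consistency_stmt_2
    (mu : ℂ) (a b : ℂ) 
    (x x1 x2 y1 y2 y3 z1 z2 w1 w2 w3 : ℂ)
    -- the eight equations of the scheme
    (e1 : Qbulk y1 x2 x1 x a b = 0)
    (e2 : qBdry mu x x1 y2 a = 0)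
    (e3 : qBdry mu x x2 y3 b = 0)
    (e4 : Qbulk y1 z1 x2 y3 (sigmaMap mu b) a = 0)
    (e5 : Qbulk y1 z2 x1 y2 (sigmaMap mu a) b = 0)
    (e6 : qBdry mu y2 z2 w1 b = 0)
    (e7 : qBdry mu y3 z1 w2 a = 0)
    (e8 : Qbulk y1 z1 z2 w3 (sigmaMap mu b) (sigmaMap mu a) = 0)
    -- nonvanishing of the coefficient of the determined variable in each
    -- affine-linear equation (coefficient = value at 1 minus value at 0)
    (c1 : Qbulk 1 x2 x1 x a b - Qbulk 0 x2 x1 x a b ≠ 0)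
    (c2 : qBdry mu x x1 1 a - qBdry mu x x1 0 a ≠ 0)
    (c3 : qBdry mu x x2 1 b - qBdry mu x x2 0 b ≠ 0)
    (c4 : Qbulk y1 1 x2 y3 (sigmaMap mu b) a - Qbulk y1 0 x2 y3 (sigmaMap mu b) a ≠ 0)
    (c5 : Qbulk y1 1 x1 y2 (sigmaMap mu a) b - Qbulk y1 0 x1 y2 (sigmaMap mu a) b ≠ 0)
    (c6 : qBdry mu y2 z2 1 b - qBdry mu y2 z2 0 b ≠ 0)
    (c7 : qBdry mu y3 z1 1 a - qBdry mu y3 z1 0 a ≠ 0)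
    (c8 : Qbulk y1 z1 z2 1 (sigmaMap mu b) (sigmaMap mu a) - Qbulk y1 z1 z2 0 (sigmaMap mu b) (sigmaMap mu a) ≠ 0) :
    w1 = w2 ∧ w2 = w3 :=
  boundary_consistency_stmt_2_general mu a b x x1 x2 y1 y2 y3 z1 z2 w1 w2 w3 e1 e2 e3 e4 e5 e6 e7 e8
    c2 c3 c4 c5 c6 c7 c8
end

section
/- Three-leg form of the bulk equation Q1 with δ=0: for all complex numbers a, b, x, u, v, y with x ≠ u, x ≠ v and x ≠ y, the equation a(x−v)(u−y) − b(x−u)(v−y) = 0 holds if and only if a/(x−u) − b/(x−v) = (a−b)/(x−y). -/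
/-! Over the common denominator `(x-u)(x-v)(x-y)` the defect of the three-leg form is exactly the
Q1 polynomial: in `a(x-v)(x-y) - b(x-u)(x-y) - (a-b)(x-u)(x-v)` the `a`-terms combine to
`a(x-v)(u-y)` and the `b`-terms to `-b(x-u)(v-y)`. -/

theorem div_sub_div_sub_div_eq_Q1_div {K : Type*} [Field K] (a b x u v y : K)
    (hxu : x - u ≠ 0) (hxv : x - v ≠ 0) (hxy : x - y ≠ 0) :
    a / (x - u) - b / (x - v) - (a - b) / (x - y) =
      (a * (x - v) * (u - y) - b * (x - u) * (v - y)) / ((x - u) * (x - v) * (x - y)) := by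
  field_simp
  ring

/-- Three-leg form of the bulk equation Q1 with δ = 0: the quad equation
`a(x−v)(u−y) − b(x−u)(v−y) = 0` is equivalent to
`a/(x−u) − b/(x−v) = (a−b)/(x−y)` whenever `x ≠ u`, `x ≠ v`, `x ≠ y`. -/
theorem three_leg_form_Q1_delta0 (a b x u v y : ℂ)
    (hxu : x ≠ u) (hxv : x ≠ v) (hxy : x ≠ y) :
    a * (x - v) * (u - y) - b * (x - u) * (v - y) = 0 ↔
      a / (x - u) - b / (x - v) = (a - b) / (x - y) := by
  have hxu' := sub_ne_zero.mpr hxu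
  have hxv' := sub_ne_zero.mpr hxv
  have hxy' := sub_ne_zero.mpr hxy
  rw [← sub_eq_zero (b := (a - b) / (x - y)), div_sub_div_sub_div_eq_Q1_div a b x u v y hxu' hxv' hxy',
    div_eq_zero_iff, or_iff_left (mul_ne_zero (mul_ne_zero hxu' hxv') hxy')]
end

section
/- Three-leg form of a boundary equation for Q1 with δ=0: for all complex numbers a, μ, x, y, z with y ≠ x, y ≠ z and y ≠ 0, the boundary equation a(y²−xz) + μ(x−y)(y+z) = 0 holds if and only if a/(y−x) − (2μ−a)/(y−z) = (a−μ)/y. -/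
/-! Over the common denominator `(y - x)(y - z)y` the three legs sum to exactly the boundary
polynomial, so one vanishes iff the other does. -/

theorem three_leg_sub_eq_boundary_div {K : Type*} [Field K] (a μ x y z : K)
    (hyx : y ≠ x) (hyz : y ≠ z) (hy : y ≠ 0) :
    a / (y - x) - (2 * μ - a) / (y - z) - (a - μ) / y =
      (a * (y ^ 2 - x * z) + μ * (x - y) * (y + z)) / ((y - x) * (y - z) * y) := by
  have hx : y - x ≠ 0 := sub_ne_zero.mpr hyx
  have hz : y - z ≠ 0 := sub_ne_zero.mpr hyz
  field_simp
  ring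

/-- Three-leg form of a boundary equation for Q1 with δ = 0: the boundary
equation `a(y²−xz) + μ(x−y)(y+z) = 0` is equivalent to
`a/(y−x) − (2μ−a)/(y−z) = (a−μ)/y` whenever `y ≠ x`, `y ≠ z`, `y ≠ 0`. -/
theorem three_leg_form_boundary_Q1_delta0 (a μ x y z : ℂ)
    (hyx : y ≠ x) (hyz : y ≠ z) (hy : y ≠ 0) :
    a * (y ^ 2 - x * z) + μ * (x - y) * (y + z) = 0 ↔
      a / (y - x) - (2 * μ - a) / (y - z) = (a - μ) / y := by
  have hden : (y - x) * (y - z) * y ≠ 0 :=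
    mul_ne_zero (mul_ne_zero (sub_ne_zero.mpr hyx) (sub_ne_zero.mpr hyz)) hy
  rw [← sub_eq_zero (b := (a - μ) / y), three_leg_sub_eq_boundary_div a μ x y z hyx hyz hy,
    div_eq_zero_iff, or_iff_left hden]
end

section
/- Fusion identity for the Lax matrices of Q1 with δ=0: let L(y,x,a;c) denote the 2×2 complex matrix (1/(x−y))·[[a·y + c·(x−y), −a·x·y],[a, −a·x + c·(x−y)]]. For all complex numbers a, A, c and all complex x, X, y, z with y ≠ x, y ≠ X, y ≠ z, if the three-leg relation A/(y−X) − a/(y−x) = (A−a)/(y−z) holds, then L(X,y,A;c) · L(y,x,a;c) = c · L(z,y,A−a;c−a). -/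
/-- The Lax matrix `L(y, x, a; c)` of the quad-graph equation Q1 with δ = 0. -/
noncomputable def LaxQ1 (y x a c : ℂ) : Matrix (Fin 2) (Fin 2) ℂ :=
  (1 / (x - y)) • !![a * y + c * (x - y), -(a * x * y); a, -(a * x) + c * (x - y)]

/-!
Away from `x = y` the Lax matrix splits as `L(y,x,a;c) = c + a·u_y v_xᵀ/(x-y)` with
`u_t = (t, 1)` and `v_t = (1, -t)`. Since `v_y ⬝ u_y = 0`, the rank-one part of `L(X,y,A;c)`
is killed by the rank-one part of `L(y,x,a;c)`, and `u_y v_xᵀ - u_x v_yᵀ = (y-x)·1` rewrites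
`L(y,x,a;c)` as `(c-a) + a·u_x v_yᵀ/(x-y)`. The product becomes
`c·((c-a) + (A u_X/(y-X) - a u_x/(y-x)) v_yᵀ)`, and the three-leg relation is the second
component of `A u_X/(y-X) - a u_x/(y-x) = (A-a) u_z/(y-z)`; the first component follows from it
because `t/(y-t) = y/(y-t) - 1`.
-/

open Matrix

section CommRing

variable {R : Type*} [CommRing R]

def q1Col (t : R) : Fin 2 → R := ![t, 1]

def q1Row (t : R) : Fin 2 → R := ![1, -t]

theorem q1Row_dotProduct_q1Col (s t : R) : q1Row s ⬝ᵥ q1Col t = t - s := by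
  simp only [q1Row, q1Col, dotProduct, Fin.sum_univ_two, cons_val_zero, cons_val_one,
    cons_val_fin_one]
  ring

theorem vecMulVec_q1Col_q1Row_sub_swap (x y : R) :
    vecMulVec (q1Col y) (q1Row x) - vecMulVec (q1Col x) (q1Row y) = (y - x) • 1 := by
  ext i j
  fin_cases i <;> fin_cases j <;> simp [q1Col, q1Row] <;> ring

end CommRing

theorem smul_q1Col_sub_smul_q1Col_of_three_leg {K : Type*} [Field K] {a A x X y z : K}
    (hyx : y ≠ x) (hyX : y ≠ X) (hyz : y ≠ z)
    (h3leg : A / (y - X) - a / (y - x) = (A - a) / (y - z)) :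
    (A / (y - X)) • q1Col X - (a / (y - x)) • q1Col x = ((A - a) / (y - z)) • q1Col z := by
  ext i
  fin_cases i
  · have leg : ∀ {b t : K}, y ≠ t → b / (y - t) * t = y * (b / (y - t)) - b := fun hyt => by
      field_simp [sub_ne_zero.mpr hyt]
      ring
    simp only [q1Col, Pi.sub_apply, Pi.smul_apply, smul_eq_mul, Fin.zero_eta, cons_val_zero]
    rw [leg hyX, leg hyx, leg hyz]
    linear_combination y * h3leg
  · simpa [q1Col] using h3leg

theorem laxQ1_eq_smul_one_add {y x : ℂ} (a c : ℂ) (hxy : x ≠ y) :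
    LaxQ1 y x a c = c • 1 + (a / (x - y)) • vecMulVec (q1Col y) (q1Row x) := by
  have hxy' : x - y ≠ 0 := sub_ne_zero.mpr hxy
  ext i j
  fin_cases i <;> fin_cases j <;> simp [LaxQ1, q1Col, q1Row] <;> field_simp <;> ring

theorem laxQ1_eq_sub_smul_one_add {y x : ℂ} (a c : ℂ) (hxy : x ≠ y) :
    LaxQ1 y x a c = (c - a) • 1 + (a / (x - y)) • vecMulVec (q1Col x) (q1Row y) := by
  have hcoeff : a / (x - y) * (y - x) = -a := by
    field_simp [sub_ne_zero.mpr hxy]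
    ring
  rw [laxQ1_eq_smul_one_add a c hxy, eq_add_of_sub_eq (vecMulVec_q1Col_q1Row_sub_swap x y),
    smul_add, smul_smul, hcoeff]
  module

theorem vecMulVec_q1Row_mul_laxQ1 {y x : ℂ} (w : Fin 2 → ℂ) (a c : ℂ) (hxy : x ≠ y) :
    vecMulVec w (q1Row y) * LaxQ1 y x a c = c • vecMulVec w (q1Row y) := by
  rw [laxQ1_eq_smul_one_add a c hxy, mul_add, mul_smul_comm, mul_one, mul_smul_comm,
    vecMulVec_mul_vecMulVec, q1Row_dotProduct_q1Col, sub_self, zero_smul, vecMulVec_zero,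
    smul_zero, add_zero]

/-- Fusion identity for the Lax matrices of Q1 with δ = 0: if the three-leg
relation `A/(y−X) − a/(y−x) = (A−a)/(y−z)` holds, then
`L(X,y,A;c) · L(y,x,a;c) = c · L(z,y,A−a;c−a)`. -/
theorem lax_fusion_Q1_delta0 (a A c x X y z : ℂ)
    (hyx : y ≠ x) (hyX : y ≠ X) (hyz : y ≠ z)
    (h3leg : A / (y - X) - a / (y - x) = (A - a) / (y - z)) :
    LaxQ1 X y A c * LaxQ1 y x a c = c • LaxQ1 z y (A - a) (c - a) := by
  have hflip : a / (x - y) = -(a / (y - x)) := by rw [← div_neg, neg_sub]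
  calc LaxQ1 X y A c * LaxQ1 y x a c
      = (c • 1 + (A / (y - X)) • vecMulVec (q1Col X) (q1Row y)) * LaxQ1 y x a c := by
        rw [laxQ1_eq_smul_one_add A c hyX]
    _ = c • (LaxQ1 y x a c + (A / (y - X)) • vecMulVec (q1Col X) (q1Row y)) := by
        rw [add_mul, smul_mul_assoc, one_mul, smul_mul_assoc,
          vecMulVec_q1Row_mul_laxQ1 _ a c hyx.symm, smul_add, smul_comm c]
    _ = c • ((c - a) • 1 +
          vecMulVec ((A / (y - X)) • q1Col X - (a / (y - x)) • q1Col x) (q1Row y)) := by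
        rw [laxQ1_eq_sub_smul_one_add a c hyx.symm, sub_vecMulVec, smul_vecMulVec,
          smul_vecMulVec, hflip]
        module
    _ = c • LaxQ1 z y (A - a) (c - a) := by
        rw [smul_q1Col_sub_smul_q1Col_of_three_leg hyx hyX hyz h3leg, smul_vecMulVec,
          laxQ1_eq_smul_one_add _ _ hyz]
end
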